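/- arXiv:1308.0224 — 6 statements merged into one kernel-verified Lean document; each statement's English description precedes it below -/
import Mathlib

section
/- Let Γ : S¹ → ℝ² be a C² closed curve parameterized by arc length (|Γ'(s)| = 1 for all s) and let Φ : S¹ → ℝ² be a C² vector field along Γ. Then there exist a ∈ ℝ and b ∈ ℝ² such that Φ(s) = a·Γ(s)^⊥ + b for all s if and only if Φ'(s)·τ(s) = 0 for all s and d/ds(Φ'(s)·n(s)) = 0 for all s, where τ = Γ', n = τ^⊥, and (x,y)^⊥ = (−y,x). -/
/-!
A rigid motion `a Γ^⊥ + b` has derivative `a τ^⊥ = a n`, so it suffices to characterize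
`Φ' = a n` with a constant `a`. Since `(τ, n)` is an orthonormal frame, `Φ'` is determined by
its components `Φ'·τ` and `Φ'·n`; so `Φ' = a n` says exactly `Φ'·τ = 0` and `Φ'·n = a`, and the
latter component is constant iff its derivative vanishes. Integrating `Φ' = a n` back gives
`Φ = a Γ^⊥ + b`.
-/

/-- Rotation by π/2: `(x,y)^⊥ = (-y,x)`. -/
def perp (v : ℝ × ℝ) : ℝ × ℝ := (-v.2, v.1)

/-- Euclidean dot product on `ℝ × ℝ`. -/
def dot (v w : ℝ × ℝ) : ℝ := v.1 * w.1 + v.2 * w.2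

theorem HasDerivAt.perp {f : ℝ → ℝ × ℝ} {v : ℝ × ℝ} {s : ℝ} (h : HasDerivAt f v s) :
    HasDerivAt (fun u => perp (f u)) (perp v) s :=
  (((ContinuousLinearMap.snd ℝ ℝ ℝ).hasFDerivAt.comp_hasDerivAt s h).neg).prodMk
    ((ContinuousLinearMap.fst ℝ ℝ ℝ).hasFDerivAt.comp_hasDerivAt s h)

theorem Differentiable.dot {E : Type*} [NormedAddCommGroup E] [NormedSpace ℝ E]
    {f g : E → ℝ × ℝ} (hf : Differentiable ℝ f) (hg : Differentiable ℝ g) :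
    Differentiable ℝ fun u => dot (f u) (g u) := by
  unfold _root_.dot
  fun_prop

theorem eq_smul_perp_iff {τ : ℝ × ℝ} (hτ : dot τ τ = 1) (v : ℝ × ℝ) (a : ℝ) :
    v = a • perp τ ↔ dot v τ = 0 ∧ dot v (perp τ) = a := by
  simp only [dot, perp] at hτ ⊢
  constructor
  · rintro rfl
    simp only [Prod.smul_fst, Prod.smul_snd, smul_eq_mul]
    exact ⟨by ring, by linear_combination a * hτ⟩
  · rintro ⟨hτv, hnv⟩
    ext
    · simp only [Prod.smul_fst, smul_eq_mul]
      linear_combination τ.1 * hτv - τ.2 * hnv - v.1 * hτ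
    · simp only [Prod.smul_snd, smul_eq_mul]
      linear_combination τ.2 * hτv + τ.1 * hnv - v.2 * hτ

theorem exists_forall_eq_smul_perp_iff {v τ : ℝ → ℝ × ℝ} (hv : Differentiable ℝ v)
    (hτ : Differentiable ℝ τ) (hτ_unit : ∀ s, dot (τ s) (τ s) = 1) :
    (∃ a : ℝ, ∀ s, v s = a • perp (τ s)) ↔
      (∀ s, dot (v s) (τ s) = 0) ∧ ∀ s, deriv (fun u => dot (v u) (perp (τ u))) s = 0 := by
  simp only [eq_smul_perp_iff (hτ_unit _)]
  constructor
  · rintro ⟨a, ha⟩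
    have hconst : (fun u => dot (v u) (perp (τ u))) = fun _ => a := funext fun s => (ha s).2
    exact ⟨fun s => (ha s).1, fun s => by rw [hconst, deriv_const]⟩
  · rintro ⟨hτv, hnv⟩
    have hdiff : Differentiable ℝ fun u => dot (v u) (perp (τ u)) :=
      hv.dot fun s => (hτ s).hasDerivAt.perp.differentiableAt
    exact ⟨_, fun s => ⟨hτv s, is_const_of_deriv_eq_zero hdiff hnv s 0⟩⟩

theorem exists_eq_smul_perp_add_iff_deriv {Γ Φ : ℝ → ℝ × ℝ} (hΓ : Differentiable ℝ Γ)
    (hΦ : Differentiable ℝ Φ) :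
    (∃ (a : ℝ) (b : ℝ × ℝ), ∀ s, Φ s = a • perp (Γ s) + b) ↔
      ∃ a : ℝ, ∀ s, deriv Φ s = a • perp (deriv Γ s) := by
  constructor
  · rintro ⟨a, b, hab⟩
    refine ⟨a, fun s => ?_⟩
    rw [funext hab]
    exact (((hΓ s).hasDerivAt.perp.const_smul a).add_const b).deriv
  · rintro ⟨a, ha⟩
    have hzero : ∀ s, HasDerivAt (fun u => Φ u - a • perp (Γ u)) 0 s := fun s => by
      have h := (hΦ s).hasDerivAt.sub ((hΓ s).hasDerivAt.perp.const_smul a)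
      rwa [← ha s, sub_self] at h
    refine ⟨a, Φ 0 - a • perp (Γ 0), fun s => ?_⟩
    rw [← is_const_of_deriv_eq_zero (fun u => (hzero u).differentiableAt)
      (fun u => (hzero u).deriv) s 0]
    abel

theorem rigid_deformation_characterization_general
    (Γ Φ : ℝ → ℝ × ℝ)
    (hΓ : ContDiff ℝ 2 Γ) (hΦ : ContDiff ℝ 2 Φ)
    (harc : ∀ s, dot (deriv Γ s) (deriv Γ s) = 1) :
    (∃ (a : ℝ) (b : ℝ × ℝ), ∀ s, Φ s = a • perp (Γ s) + b) ↔
      ((∀ s, dot (deriv Φ s) (deriv Γ s) = 0) ∧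
       (∀ s, deriv (fun u => dot (deriv Φ u) (perp (deriv Γ u))) s = 0)) := by
  rw [exists_eq_smul_perp_add_iff_deriv (hΓ.differentiable two_ne_zero)
    (hΦ.differentiable two_ne_zero)]
  exact exists_forall_eq_smul_perp_iff hΦ.differentiable_deriv_two hΓ.differentiable_deriv_two harc

/-- Characterization of infinitesimal rigid motions along a closed arc-length parameterized
`C²` curve: `Φ = a Γ^⊥ + b` iff `Φ'·τ = 0` and `(Φ'·n)' = 0`, where `τ = Γ'`, `n = τ^⊥`. -/
theorem rigid_deformation_characterization
    (Γ Φ : ℝ → ℝ × ℝ)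
    (hΓper : Function.Periodic Γ 1) (hΦper : Function.Periodic Φ 1)
    (hΓ : ContDiff ℝ 2 Γ) (hΦ : ContDiff ℝ 2 Φ)
    (harc : ∀ s, dot (deriv Γ s) (deriv Γ s) = 1) :
    (∃ (a : ℝ) (b : ℝ × ℝ), ∀ s, Φ s = a • perp (Γ s) + b) ↔
      ((∀ s, dot (deriv Φ s) (deriv Γ s) = 0) ∧
       (∀ s, deriv (fun u => dot (deriv Φ u) (perp (deriv Γ u))) s = 0)) :=
  rigid_deformation_characterization_general Γ Φ hΓ hΦ harc
end

section
/- Let Γ : S¹ → ℝ² be a C² closed curve parameterized by arc length and Φ : S¹ → ℝ² a C² vector field along it. Then there exist α, β ∈ ℝ and b ∈ ℝ² such that Φ(s) = A Γ(s) + b for all s, where A is the 2×2 matrix with rows (α, −β) and (β, α), if and only if the function s ↦ (Φ'(s)·τ(s), Φ'(s)·n(s)) is constant on S¹. -/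
lemma eq_dot_smul_add_dot_perp_smul {τ : ℝ × ℝ} (hτ : dot τ τ = 1) (v : ℝ × ℝ) :
    v = dot v τ • τ + dot v (perp τ) • perp τ := by
  simp only [dot, perp] at hτ ⊢
  ext <;> simp only [Prod.fst_add, Prod.snd_add, Prod.smul_fst, Prod.smul_snd, smul_eq_mul]
  · linear_combination (-v.1) * hτ
  · linear_combination (-v.2) * hτ

lemma dot_smul_add_perp_smul {τ : ℝ × ℝ} (hτ : dot τ τ = 1) (α β : ℝ) :
    (dot (α • τ + β • perp τ) τ, dot (α • τ + β • perp τ) (perp τ)) = (α, β) := by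
  simp only [dot, perp, Prod.fst_add, Prod.snd_add, Prod.smul_fst, Prod.smul_snd,
    smul_eq_mul, Prod.mk.injEq] at hτ ⊢
  exact ⟨by linear_combination α * hτ, by linear_combination β * hτ⟩

lemma hasDerivAt_perp {f : ℝ → ℝ × ℝ} {f' : ℝ × ℝ} {s : ℝ} (hf : HasDerivAt f f' s) :
    HasDerivAt (fun t => perp (f t)) (perp f') s :=
  ((-ContinuousLinearMap.snd ℝ ℝ ℝ).prod (ContinuousLinearMap.fst ℝ ℝ ℝ)).hasFDerivAt.comp_hasDerivAt
    s hf

lemma hasDerivAt_smul_add_smul_perp {f : ℝ → ℝ × ℝ} {f' : ℝ × ℝ} {s : ℝ}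
    (hf : HasDerivAt f f' s) (α β : ℝ) :
    HasDerivAt (fun t => α • f t + β • perp (f t)) (α • f' + β • perp f') s :=
  (hf.const_smul α).add ((hasDerivAt_perp hf).const_smul β)

lemma exists_eq_smul_add_smul_perp_add_of_deriv_eq {Γ Φ : ℝ → ℝ × ℝ}
    (hΓ : Differentiable ℝ Γ) (hΦ : Differentiable ℝ Φ) {α β : ℝ}
    (h : ∀ s, deriv Φ s = α • deriv Γ s + β • perp (deriv Γ s)) :
    ∃ b : ℝ × ℝ, ∀ s, Φ s = α • Γ s + β • perp (Γ s) + b := by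
  have hg (t : ℝ) : HasDerivAt (fun u => Φ u - (α • Γ u + β • perp (Γ u))) 0 t := by
    have hsub := (hΦ t).hasDerivAt.sub (hasDerivAt_smul_add_smul_perp (hΓ t).hasDerivAt α β)
    rwa [h t, sub_self] at hsub
  refine ⟨Φ 0 - (α • Γ 0 + β • perp (Γ 0)), fun s => ?_⟩
  rw [← is_const_of_deriv_eq_zero (fun t => (hg t).differentiableAt) (fun t => (hg t).deriv) s 0]
  abel

theorem similarity_deformation_characterization_general
    (Γ Φ : ℝ → ℝ × ℝ)
    (hΓ : ContDiff ℝ 2 Γ) (hΦ : ContDiff ℝ 2 Φ)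
    (harc : ∀ s, dot (deriv Γ s) (deriv Γ s) = 1) :
    (∃ (α β : ℝ) (b : ℝ × ℝ), ∀ s, Φ s = α • Γ s + β • perp (Γ s) + b) ↔
      (∃ c : ℝ × ℝ, ∀ s,
        (dot (deriv Φ s) (deriv Γ s), dot (deriv Φ s) (perp (deriv Γ s))) = c) := by
  have hΓdiff : Differentiable ℝ Γ := hΓ.differentiable (by norm_num)
  constructor
  · rintro ⟨α, β, b, hΦeq⟩
    refine ⟨(α, β), fun s => ?_⟩
    have hderiv : HasDerivAt Φ (α • deriv Γ s + β • perp (deriv Γ s)) s := by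
      rw [funext hΦeq]
      exact (hasDerivAt_smul_add_smul_perp (hΓdiff s).hasDerivAt α β).add_const b
    rw [hderiv.deriv, dot_smul_add_perp_smul (harc s)]
  · rintro ⟨⟨α, β⟩, hc⟩
    refine ⟨α, β, exists_eq_smul_add_smul_perp_add_of_deriv_eq hΓdiff
      (hΦ.differentiable (by norm_num)) fun s => ?_⟩
    have hcoord := Prod.mk.inj (hc s)
    rw [eq_dot_smul_add_dot_perp_smul (harc s) (deriv Φ s), hcoord.1, hcoord.2]

/-- Characterization of infinitesimal similarity motions along a closed arc-length
parameterized `C²` curve: `Φ = AΓ + b` with `A = ((α,-β),(β,α))` (i.e. `AΓ = αΓ + β Γ^⊥`)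
iff `s ↦ (Φ'·τ, Φ'·n)` is constant, where `τ = Γ'`, `n = τ^⊥`. -/
theorem similarity_deformation_characterization
    (Γ Φ : ℝ → ℝ × ℝ)
    (hΓper : Function.Periodic Γ 1) (hΦper : Function.Periodic Φ 1)
    (hΓ : ContDiff ℝ 2 Γ) (hΦ : ContDiff ℝ 2 Φ)
    (harc : ∀ s, dot (deriv Γ s) (deriv Γ s) = 1) :
    (∃ (α β : ℝ) (b : ℝ × ℝ), ∀ s, Φ s = α • Γ s + β • perp (Γ s) + b) ↔
      (∃ c : ℝ × ℝ, ∀ s,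
        (dot (deriv Φ s) (deriv Γ s), dot (deriv Φ s) (perp (deriv Γ s))) = c) :=
  similarity_deformation_characterization_general Γ Φ hΓ hΦ harc
end

section
/- Let f : [0,1] → ℝ be piecewise constant with respect to the uniform partition with n nodes, i.e. f = Σ_{i=1}^n f_i ζ_i with ζ_i the indicator of [i/n, (i+1)/n) (indices mod n, periodic boundary conditions). Then the total variation of f on the circle equals the sum of jump sizes: TV(f) = Σ_{i=1}^n |f_i − f_{i−1}|. -/
/-!
On `[0, 1]`, `f` is `c` composed with the monotone step map `s ↦ ⌊n s⌋₊`, whose image is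
`{0, …, n}`. Variation is unchanged under monotone reparametrization, so `TV(f)` is the variation
of the finite sequence `c 0, c 1, …, c (n - 1), c n = c 0`, i.e. the sum of its consecutive jumps;
the periodic jump `c (n - 1) → c 0` comes from the endpoint `s = 1`.
-/

open Set

lemma ZMod.sum_range_natCast {M : Type*} [AddCommMonoid M] {n : ℕ} [NeZero n] (F : ZMod n → M) :
    ∑ j ∈ Finset.range n, F j = ∑ i : ZMod n, F i := by
  refine Finset.sum_nbij' (fun j => (j : ZMod n)) ZMod.val (fun _ _ => Finset.mem_univ _)
    (fun i _ => Finset.mem_range.mpr (ZMod.val_lt i))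
    (fun j hj => ZMod.val_cast_of_lt (Finset.mem_range.mp hj))
    (fun i _ => ZMod.natCast_zmod_val i) (fun _ _ => rfl)

lemma ZMod.sum_edist_add_one {n : ℕ} [NeZero n] (c : ZMod n → ℝ) :
    ∑ i : ZMod n, edist (c i) (c (i + 1)) =
      ENNReal.ofReal (∑ i : ZMod n, |c i - c (i - 1)|) := by
  rw [ENNReal.ofReal_sum_of_nonneg fun i _ => abs_nonneg _,
    ← Equiv.sum_comp (Equiv.subRight (1 : ZMod n))]
  refine Finset.sum_congr rfl fun i _ => ?_
  rw [Equiv.subRight_apply, sub_add_cancel, edist_comm, edist_dist, Real.dist_eq]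

lemma monotone_natFloor_mul {a : ℝ} (ha : 0 ≤ a) : Monotone fun s : ℝ => ⌊a * s⌋₊ :=
  Nat.floor_mono.comp (monotone_mul_left_of_nonneg ha)

lemma image_natFloor_mul_Icc_zero_one (n : ℕ) [NeZero n] :
    (fun s : ℝ => ⌊(n : ℝ) * s⌋₊) '' Icc 0 1 = Iic n := by
  have hn : (0 : ℝ) < n := Nat.cast_pos.mpr (Nat.pos_of_neZero n)
  ext k
  constructor
  · rintro ⟨s, ⟨-, hs1⟩, rfl⟩
    calc ⌊(n : ℝ) * s⌋₊ ≤ ⌊(n : ℝ) * 1⌋₊ := monotone_natFloor_mul hn.le hs1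
      _ = n := by rw [mul_one, Nat.floor_natCast]
  · intro hk
    refine ⟨k / n, ⟨by positivity, (div_le_one hn).mpr (by exact_mod_cast hk)⟩, ?_⟩
    simp only [mul_div_cancel₀ _ hn.ne', Nat.floor_natCast]

/-- The total variation on the circle (`[0,1]` with periodic identification) of a piecewise
constant function `f = Σᵢ fᵢ ζᵢ`, where `ζᵢ` is the indicator of `[i/n, (i+1)/n)`, equals
the sum of the jump sizes `Σᵢ |fᵢ − fᵢ₋₁|` (indices mod `n`). -/
theorem totalVariation_piecewise_constant
    (n : ℕ) [NeZero n] (c : ZMod n → ℝ)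
    (f : ℝ → ℝ) (hf : ∀ s : ℝ, f s = c ((⌊(n : ℝ) * s⌋ : ℤ) : ZMod n)) :
    eVariationOn f (Set.Icc 0 1) =
      ENNReal.ofReal (∑ i : ZMod n, |c i - c (i - 1)|) := by
  have hf_Icc : EqOn f ((c ∘ Nat.cast) ∘ fun s : ℝ => ⌊(n : ℝ) * s⌋₊) (Icc 0 1) := by
    intro s hs
    rw [hf, Function.comp_apply, Function.comp_apply,
      ← Int.natCast_floor_eq_floor (mul_nonneg n.cast_nonneg hs.1), Int.cast_natCast]
  calc eVariationOn f (Icc 0 1)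
      = eVariationOn (c ∘ Nat.cast) (Iic n) := by
        rw [eVariationOn.eq_of_eqOn hf_Icc, eVariationOn.comp_eq_of_monotoneOn _ _
          ((monotone_natFloor_mul n.cast_nonneg).monotoneOn _), image_natFloor_mul_Icc_zero_one]
    _ = ∑ j ∈ Finset.range n, edist (c j) (c (j + 1)) := by
        simpa using eVariationOn.image_range_of_monotone (c ∘ Nat.cast) monotone_id n
    _ = ENNReal.ofReal (∑ i : ZMod n, |c i - c (i - 1)|) := by
        rw [ZMod.sum_range_natCast (fun i => edist (c i) (c (i + 1))), ZMod.sum_edist_add_one]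
end

section
/- Let Γ : S¹ → ℝ² be C², injective, parameterized by arc length, and suppose Γ is neither (an arc of) a line nor a circle. Then for every unit vector e ∈ ℝ² and every s₀ ∈ S¹, the 2×2 Gram matrix A(e,s₀) with entries A₁₁ = ∫(e·n)² ds, A₁₂ = A₂₁ = ∫((Γ(s)−Γ(s₀))^⊥·n)(e·n) ds, A₂₂ = ∫((Γ(s)−Γ(s₀))^⊥·n)² ds is positive definite; equivalently, there is no α ∈ ℝ such that (e − α(Γ(s)−Γ(s₀))^⊥)·n(s) = 0 for all s ∈ S¹. -/
/-!
Since `v^⊥·w^⊥ = v·w`, a combination `a (e·n) + b ((Γ - Γ(s₀))^⊥·n)` equals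
`a (e·n) + b (Γ - Γ(s₀))·Γ'`, which is half the derivative of
`b |Γ - Γ(s₀)|² - 2a e^⊥·(Γ - Γ(s₀))`. If the combination vanishes identically, this function is
constant, hence zero (look at `s₀`): for `b ≠ 0` the curve lies on the circle of radius `|a / b|`
about `Γ(s₀) + (a / b) e^⊥`, and for `b = 0` on the line through `Γ(s₀)` with direction `e`.
So the two functions are linearly independent on a period, and the quadratic form of their Gram
matrix, `x ↦ ∫ (x₁ f + x₂ g)²`, is positive definite.
-/

open Set

lemma Function.Periodic.deriv {𝕜 E : Type*} [NontriviallyNormedField 𝕜] [NormedAddCommGroup E]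
    [NormedSpace 𝕜 E] {f : 𝕜 → E} {T : 𝕜} (hf : Function.Periodic f T) :
    Function.Periodic (_root_.deriv f) T := fun x => by
  rw [← deriv_comp_add_const, hf.funext]

lemma Function.Periodic.eq_zero_of_forall_mem_Ico {β : Type*} [Zero β] {h : ℝ → β} {T : ℝ}
    (hT : 0 < T) (hper : Function.Periodic h T) (h0 : ∀ s ∈ Ico 0 T, h s = 0) (s : ℝ) :
    h s = 0 := by
  obtain ⟨t, ht, hts⟩ := hper.exists_mem_Ico₀ hT s
  rw [hts]
  exact h0 t ht

open Matrix in
lemma posDef_of_fin_two {p q r : ℝ}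
    (h : ∀ x y : ℝ, (x, y) ≠ 0 → 0 < p * x ^ 2 + 2 * q * x * y + r * y ^ 2) :
    !![p, q; q, r].PosDef := by
  refine .of_dotProduct_mulVec_pos ?_ fun v hv => ?_
  · ext i j; fin_cases i <;> fin_cases j <;> rfl
  · have hv' : (v 0, v 1) ≠ 0 := fun h0 => hv <| by
      ext i; fin_cases i
      exacts [congrArg Prod.fst h0, congrArg Prod.snd h0]
    refine (h _ _ hv').trans_eq ?_
    simp only [dotProduct, Pi.star_apply, star_trivial, mulVec, of_apply, cons_val',
      cons_val_fin_one, Fin.sum_univ_two, cons_val_zero, cons_val_one]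
    ring

section Gram

open intervalIntegral

variable {f g : ℝ → ℝ} {a b : ℝ}

lemma integral_add_mul_sq (hab : a ≤ b) (hf : ContinuousOn f (Icc a b))
    (hg : ContinuousOn g (Icc a b)) (x y : ℝ) :
    ∫ s in a..b, (x * f s + y * g s) ^ 2 = (∫ s in a..b, f s ^ 2) * x ^ 2
      + 2 * (∫ s in a..b, g s * f s) * x * y + (∫ s in a..b, g s ^ 2) * y ^ 2 := by
  have hff : IntervalIntegrable (fun s => f s ^ 2 * x ^ 2) MeasureTheory.volume a b :=
    ((hf.pow 2).mul continuousOn_const).intervalIntegrable_of_Icc hab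
  have hgf : IntervalIntegrable (fun s => g s * f s * (2 * x * y)) MeasureTheory.volume a b :=
    ((hg.mul hf).mul continuousOn_const).intervalIntegrable_of_Icc hab
  have hgg : IntervalIntegrable (fun s => g s ^ 2 * y ^ 2) MeasureTheory.volume a b :=
    ((hg.pow 2).mul continuousOn_const).intervalIntegrable_of_Icc hab
  calc ∫ s in a..b, (x * f s + y * g s) ^ 2
      = ∫ s in a..b, f s ^ 2 * x ^ 2 + g s * f s * (2 * x * y) + g s ^ 2 * y ^ 2 :=
        integral_congr fun s _ => by ring
    _ = _ := by
      rw [integral_add (hff.add hgf) hgg, integral_add hff hgf, integral_mul_const,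
        integral_mul_const, integral_mul_const]
      ring

lemma posDef_intervalIntegral_gram (hab : a < b) (hf : ContinuousOn f (Icc a b))
    (hg : ContinuousOn g (Icc a b))
    (hindep : ∀ x y : ℝ, (∀ s ∈ Icc a b, x * f s + y * g s = 0) → (x, y) = 0) :
    !![∫ s in a..b, f s ^ 2, ∫ s in a..b, g s * f s;
       ∫ s in a..b, g s * f s, ∫ s in a..b, g s ^ 2].PosDef := by
  refine posDef_of_fin_two fun x y hxy => ?_
  obtain ⟨c, hc, hc0⟩ : ∃ c ∈ Icc a b, x * f c + y * g c ≠ 0 := by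
    by_contra! h
    exact hxy (hindep x y h)
  rw [← integral_add_mul_sq hab.le hf hg]
  exact integral_pos hab (by fun_prop) (fun _ _ => sq_nonneg _) ⟨c, hc, by positivity⟩

end Gram

lemma eq_dot_smul_of_dot_perp_eq_zero {e v : ℝ × ℝ} (he : dot e e = 1)
    (h : dot (perp e) v = 0) : v = dot e v • e := by
  simp only [dot, perp] at he h
  ext
  · simp only [dot, Prod.smul_fst, smul_eq_mul]; linear_combination (-e.2) * h - v.1 * he
  · simp only [dot, Prod.smul_snd, smul_eq_mul]; linear_combination e.1 * h - v.2 * he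

lemma hasDerivAt_dot {u v : ℝ → ℝ × ℝ} {u' v' : ℝ × ℝ} {t : ℝ} (hu : HasDerivAt u u' t)
    (hv : HasDerivAt v v' t) :
    HasDerivAt (fun s => dot (u s) (v s)) (dot u' (v t) + dot (u t) v') t := by
  have hu1 : HasDerivAt (fun s => (u s).1) u'.1 t := by simpa using hu.hasFDerivAt.fst.hasDerivAt
  have hu2 : HasDerivAt (fun s => (u s).2) u'.2 t := by simpa using hu.hasFDerivAt.snd.hasDerivAt
  have hv1 : HasDerivAt (fun s => (v s).1) v'.1 t := by simpa using hv.hasFDerivAt.fst.hasDerivAt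
  have hv2 : HasDerivAt (fun s => (v s).2) v'.2 t := by simpa using hv.hasFDerivAt.snd.hasDerivAt
  exact ((hu1.mul hv1).add (hu2.mul hv2)).congr_deriv (by simp only [dot]; ring)

section Curve

variable {Γ : ℝ → ℝ × ℝ} {e c : ℝ × ℝ} {a b : ℝ}

lemma sq_dist_sub_dot_perp_eq_of_normal_combination_eq_zero (hΓ : Differentiable ℝ Γ)
    (h : ∀ s, a * dot e (perp (deriv Γ s)) + b * dot (perp (Γ s - c)) (perp (deriv Γ s)) = 0)
    (s t : ℝ) :
    b * dot (Γ s - c) (Γ s - c) - 2 * a * dot (perp e) (Γ s - c)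
      = b * dot (Γ t - c) (Γ t - c) - 2 * a * dot (perp e) (Γ t - c) := by
  have hderiv : ∀ s, HasDerivAt
      (fun s => b * dot (Γ s - c) (Γ s - c) - 2 * a * dot (perp e) (Γ s - c)) 0 s := by
    intro s
    have hΓc := (hΓ s).hasDerivAt.sub_const c
    refine (((hasDerivAt_dot hΓc hΓc).const_mul b).sub
      ((hasDerivAt_dot (hasDerivAt_const s (perp e)) hΓc).const_mul (2 * a))).congr_deriv ?_
    have hs := h s
    simp only [dot, perp, Prod.fst_sub, Prod.snd_sub, Prod.fst_zero, Prod.snd_zero] at hs ⊢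
    linear_combination 2 * hs
  exact is_const_of_deriv_eq_zero (fun s => (hderiv s).differentiableAt)
    (fun s => (hderiv s).deriv) s t

lemma line_or_circle_of_normal_combination_eq_zero (hΓ : Differentiable ℝ Γ)
    (he : dot e e = 1) (s₀ : ℝ) (hab : (a, b) ≠ 0)
    (h : ∀ s, a * dot e (perp (deriv Γ s)) + b * dot (perp (Γ s - Γ s₀)) (perp (deriv Γ s)) = 0) :
    (∃ p v : ℝ × ℝ, ∀ s : ℝ, ∃ t : ℝ, Γ s = p + t • v) ∨
      ∃ (ctr : ℝ × ℝ) (ρ : ℝ), ∀ s : ℝ, dot (Γ s - ctr) (Γ s - ctr) = ρ ^ 2 := by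
  have hψ : ∀ s, b * dot (Γ s - Γ s₀) (Γ s - Γ s₀) = 2 * a * dot (perp e) (Γ s - Γ s₀) := by
    intro s
    have := sq_dist_sub_dot_perp_eq_of_normal_combination_eq_zero hΓ h s s₀
    simp only [sub_self, dot, perp, Prod.fst_zero, Prod.snd_zero] at this ⊢
    linear_combination this
  by_cases hb : b = 0
  · have ha : a ≠ 0 := fun ha => hab (by simp [ha, hb])
    refine .inl ⟨Γ s₀, e, fun s => ⟨dot e (Γ s - Γ s₀), ?_⟩⟩
    have hperp : dot (perp e) (Γ s - Γ s₀) = 0 := by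
      simpa [hb, ha] using (hψ s).symm
    rw [← eq_dot_smul_of_dot_perp_eq_zero he hperp, add_sub_cancel]
  · refine .inr ⟨Γ s₀ + (a / b) • perp e, a / b, fun s => ?_⟩
    have hs := hψ s
    simp only [dot, perp, Prod.fst_sub, Prod.snd_sub, Prod.fst_add, Prod.snd_add,
      Prod.smul_fst, Prod.smul_snd, smul_eq_mul] at hs he ⊢
    field_simp
    linear_combination b * hs + a ^ 2 * he

theorem gram_matrix_posDef_general
    (L : ℝ) (hL : 0 < L) (Γ : ℝ → ℝ × ℝ)
    (hΓper : Function.Periodic Γ L) (hΓ : ContDiff ℝ 2 Γ)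
    (hnotline : ¬ ∃ p v : ℝ × ℝ, ∀ s : ℝ, ∃ t : ℝ, Γ s = p + t • v)
    (hnotcircle : ¬ ∃ (ctr : ℝ × ℝ) (ρ : ℝ), ∀ s : ℝ,
      dot (Γ s - ctr) (Γ s - ctr) = ρ ^ 2) :
    ∀ (e : ℝ × ℝ), dot e e = 1 → ∀ s₀ : ℝ,
      (Matrix.PosDef
        !![∫ s in (0:ℝ)..L, (dot e (perp (deriv Γ s))) ^ 2,
           ∫ s in (0:ℝ)..L,
             (dot (perp (Γ s - Γ s₀)) (perp (deriv Γ s))) * (dot e (perp (deriv Γ s)));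
           ∫ s in (0:ℝ)..L,
             (dot (perp (Γ s - Γ s₀)) (perp (deriv Γ s))) * (dot e (perp (deriv Γ s))),
           ∫ s in (0:ℝ)..L, (dot (perp (Γ s - Γ s₀)) (perp (deriv Γ s))) ^ 2]) ∧
      ¬ ∃ α : ℝ, ∀ s : ℝ,
        dot (e - α • perp (Γ s - Γ s₀)) (perp (deriv Γ s)) = 0 := by
  intro e he s₀
  have hΓc : Continuous Γ := hΓ.continuous
  have hΓ' : Continuous (deriv Γ) := hΓ.continuous_deriv one_le_two
  have hf : Continuous fun s => dot e (perp (deriv Γ s)) := by unfold dot perp; fun_prop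
  have hg : Continuous fun s => dot (perp (Γ s - Γ s₀)) (perp (deriv Γ s)) := by
    unfold dot perp; fun_prop
  have hindep : ∀ x y : ℝ, (∀ s, x * dot e (perp (deriv Γ s))
      + y * dot (perp (Γ s - Γ s₀)) (perp (deriv Γ s)) = 0) → (x, y) = 0 := by
    intro x y h
    by_contra hxy
    rcases line_or_circle_of_normal_combination_eq_zero (hΓ.differentiable two_ne_zero) he s₀
      hxy h with hline | hcircle
    exacts [hnotline hline, hnotcircle hcircle]
  refine ⟨posDef_intervalIntegral_gram hL hf.continuousOn hg.continuousOn
    fun x y h => hindep x y ?_, ?_⟩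
  · refine Function.Periodic.eq_zero_of_forall_mem_Ico hL (fun s => ?_)
      fun s hs => h s (Ico_subset_Icc_self hs)
    simp only [hΓper s, hΓper.deriv s]
  · rintro ⟨α, hα⟩
    refine one_ne_zero (congrArg Prod.fst (hindep 1 (-α) fun s => ?_))
    rw [← hα s]
    simp only [dot, perp, Prod.fst_sub, Prod.snd_sub, Prod.smul_fst, Prod.smul_snd, smul_eq_mul]
    ring

/-- For a closed, injective, arc-length parameterized `C²` curve `Γ` (of length `L`) that is
neither contained in a line nor a circle, the Gram matrix of the functions
`s ↦ e·n(s)` and `s ↦ (Γ(s)−Γ(s₀))^⊥·n(s)` in `L²` is positive definite; equivalently there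
is no `α ∈ ℝ` with `(e − α(Γ(s)−Γ(s₀))^⊥)·n(s) = 0` for all `s`. Here `n = Γ'^⊥`. -/
theorem gram_matrix_posDef
    (L : ℝ) (hL : 0 < L) (Γ : ℝ → ℝ × ℝ)
    (hΓper : Function.Periodic Γ L) (hΓ : ContDiff ℝ 2 Γ)
    (harc : ∀ s, dot (deriv Γ s) (deriv Γ s) = 1)
    (hinj : ∀ s ∈ Set.Ico (0 : ℝ) L, ∀ s' ∈ Set.Ico (0 : ℝ) L, Γ s = Γ s' → s = s')
    (hnotline : ¬ ∃ p v : ℝ × ℝ, ∀ s : ℝ, ∃ t : ℝ, Γ s = p + t • v)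
    (hnotcircle : ¬ ∃ (ctr : ℝ × ℝ) (ρ : ℝ), ∀ s : ℝ,
      dot (Γ s - ctr) (Γ s - ctr) = ρ ^ 2) :
    ∀ (e : ℝ × ℝ), dot e e = 1 → ∀ s₀ : ℝ,
      (Matrix.PosDef
        !![∫ s in (0:ℝ)..L, (dot e (perp (deriv Γ s))) ^ 2,
           ∫ s in (0:ℝ)..L,
             (dot (perp (Γ s - Γ s₀)) (perp (deriv Γ s))) * (dot e (perp (deriv Γ s)));
           ∫ s in (0:ℝ)..L,
             (dot (perp (Γ s - Γ s₀)) (perp (deriv Γ s))) * (dot e (perp (deriv Γ s))),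
           ∫ s in (0:ℝ)..L, (dot (perp (Γ s - Γ s₀)) (perp (deriv Γ s))) ^ 2]) ∧
      ¬ ∃ α : ℝ, ∀ s : ℝ,
        dot (e - α • perp (Γ s - Γ s₀)) (perp (deriv Γ s)) = 0 :=
  gram_matrix_posDef_general L hL Γ hΓper hΓ hnotline hnotcircle
end Curve
end

section
/- Let H be a real Hilbert space and E : H → ℝ a nonnegative C¹ function whose gradient is L-Lipschitz: ‖∇E(x) − ∇E(y)‖ ≤ L‖x − y‖ for all x, y ∈ H. Let {x_k} ⊂ H be generated by x_{k+1} = x_k − τ_k d_k where each d_k is a descent direction (⟨∇E(x_k), d_k⟩ > 0) and each step size τ_k satisfies the Wolfe conditions E(x_k − τ_k d_k) ≤ E(x_k) − α τ_k ⟨∇E(x_k), d_k⟩ and ⟨∇E(x_k − τ_k d_k), −d_k⟩ ≥ −β⟨∇E(x_k), d_k⟩ with 0 < α < β < 1. Then the Zoutendijk condition holds: Σ_k cos²θ_k ‖∇E(x_k)‖² < ∞, where cos θ_k = ⟨∇E(x_k), d_k⟩ / (‖∇E(x_k)‖ ‖d_k‖). -/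
/-!
Each Wolfe step decreases `E` by a fixed multiple of `cos²θ_k ‖∇E(x_k)‖²`. The curvature
condition and the Lipschitz bound on `∇E` force `τ_k ≥ (1 - β)⟪∇E(x_k), d_k⟫ / (L‖d_k‖²)`;
inserted into the sufficient-decrease condition this gives
`E(x_k) - E(x_{k+1}) ≥ α(1 - β)/L · ⟪∇E(x_k), d_k⟫² / ‖d_k‖²`, and the right-hand side is
`α(1 - β)/L · cos²θ_k ‖∇E(x_k)‖²`. Since `E ≥ 0`, the decreases telescope to a bounded series.
-/

open RealInnerProductSpace

theorem summable_of_le_sub_succ {f u : ℕ → ℝ} (hf : ∀ k, 0 ≤ f k)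
    (hdec : ∀ k, f k ≤ u k - u (k + 1)) (hu : ∀ k, 0 ≤ u k) : Summable f := by
  refine summable_of_sum_range_le hf (c := u 0) fun n => ?_
  calc ∑ k ∈ Finset.range n, f k
      ≤ ∑ k ∈ Finset.range n, (u k - u (k + 1)) := Finset.sum_le_sum fun k _ => hdec k
    _ = u 0 - u n := Finset.sum_range_sub' u n
    _ ≤ u 0 := sub_le_self _ (hu n)

section Wolfe

variable {H : Type*} [NormedAddCommGroup H] [InnerProductSpace ℝ H]

theorem inner_div_norm_mul_norm_sq_mul_norm_sq (g d : H) :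
    (⟪g, d⟫ / (‖g‖ * ‖d‖)) ^ 2 * ‖g‖ ^ 2 = ⟪g, d⟫ ^ 2 / ‖d‖ ^ 2 := by
  rcases eq_or_ne g 0 with rfl | hg
  · simp
  have : ‖g‖ ≠ 0 := norm_ne_zero_iff.2 hg
  field_simp

variable {E : H → ℝ} {gradE : H → H} {L α β τ : ℝ} {x d : H}

theorem one_sub_mul_inner_le_of_curvature
    (hlip : ∀ x y : H, ‖gradE x - gradE y‖ ≤ L * ‖x - y‖) (hτ : 0 ≤ τ)
    (hcurv : ⟪gradE (x - τ • d), -d⟫ ≥ -β * ⟪gradE x, d⟫) :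
    (1 - β) * ⟪gradE x, d⟫ ≤ L * τ * ‖d‖ ^ 2 := by
  rw [inner_neg_right] at hcurv
  calc (1 - β) * ⟪gradE x, d⟫ ≤ ⟪gradE x - gradE (x - τ • d), d⟫ := by
        rw [inner_sub_left]; linarith
    _ ≤ ‖gradE x - gradE (x - τ • d)‖ * ‖d‖ := real_inner_le_norm _ _
    _ ≤ L * ‖x - (x - τ • d)‖ * ‖d‖ := by gcongr; exact hlip _ _
    _ = L * τ * ‖d‖ ^ 2 := by
        rw [sub_sub_cancel, norm_smul, Real.norm_of_nonneg hτ]; ring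

theorem wolfe_step_decrease (hL : 0 < L) (hα : 0 ≤ α) (hτ : 0 ≤ τ)
    (hdescent : 0 < ⟪gradE x, d⟫)
    (hlip : ∀ x y : H, ‖gradE x - gradE y‖ ≤ L * ‖x - y‖)
    (hwolfe1 : E (x - τ • d) ≤ E x - α * τ * ⟪gradE x, d⟫)
    (hwolfe2 : ⟪gradE (x - τ • d), -d⟫ ≥ -β * ⟪gradE x, d⟫) :
    α * (1 - β) / L * (⟪gradE x, d⟫ ^ 2 / ‖d‖ ^ 2) ≤ E x - E (x - τ • d) := by
  have hd : 0 < ‖d‖ := norm_pos_iff.2 fun h => by simp [h] at hdescent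
  have hstep := one_sub_mul_inner_le_of_curvature hlip hτ hwolfe2
  have hdecrease : α * (1 - β) * ⟪gradE x, d⟫ ^ 2 ≤ L * ‖d‖ ^ 2 * (α * τ * ⟪gradE x, d⟫) := by
    have := mul_le_mul_of_nonneg_left hstep (mul_nonneg hα hdescent.le)
    linarith
  calc α * (1 - β) / L * (⟪gradE x, d⟫ ^ 2 / ‖d‖ ^ 2)
      = α * (1 - β) * ⟪gradE x, d⟫ ^ 2 / (L * ‖d‖ ^ 2) := by field_simp
    _ ≤ α * τ * ⟪gradE x, d⟫ := by rw [div_le_iff₀ (by positivity)]; linarith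
    _ ≤ E x - E (x - τ • d) := by linarith

end Wolfe

theorem zoutendijk_general
    {H : Type*} [NormedAddCommGroup H] [InnerProductSpace ℝ H]
    (E : H → ℝ) (gradE : H → H)
    (hEnonneg : ∀ x, 0 ≤ E x)
    (L : ℝ) (hL : 0 < L)
    (hlip : ∀ x y : H, ‖gradE x - gradE y‖ ≤ L * ‖x - y‖)
    (x d : ℕ → H) (τ : ℕ → ℝ)
    (hiter : ∀ k, x (k + 1) = x k - τ k • d k)
    (hτ : ∀ k, 0 < τ k)
    (hdescent : ∀ k, 0 < ⟪gradE (x k), d k⟫)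
    (α β : ℝ) (hα : 0 < α) (hβ : β < 1)
    (hwolfe1 : ∀ k, E (x k - τ k • d k) ≤ E (x k) - α * τ k * ⟪gradE (x k), d k⟫)
    (hwolfe2 : ∀ k, ⟪gradE (x k - τ k • d k), -d k⟫ ≥ -β * ⟪gradE (x k), d k⟫) :
    Summable (fun k =>
      (⟪gradE (x k), d k⟫ / (‖gradE (x k)‖ * ‖d k‖)) ^ 2 * ‖gradE (x k)‖ ^ 2) := by
  have hc : 0 < α * (1 - β) / L := div_pos (mul_pos hα (sub_pos.2 hβ)) hL
  have hstep : ∀ k, α * (1 - β) / L *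
      ((⟪gradE (x k), d k⟫ / (‖gradE (x k)‖ * ‖d k‖)) ^ 2 * ‖gradE (x k)‖ ^ 2)
        ≤ E (x k) - E (x (k + 1)) := fun k => by
    rw [inner_div_norm_mul_norm_sq_mul_norm_sq, hiter]
    exact wolfe_step_decrease hL hα.le (hτ k).le (hdescent k) hlip (hwolfe1 k) (hwolfe2 k)
  refine (summable_mul_left_iff hc.ne').1 (summable_of_le_sub_succ (fun k => ?_) hstep
    fun k => hEnonneg _)
  positivity

/-- The Zoutendijk theorem in a (possibly infinite-dimensional) real Hilbert space: for a
nonnegative `C¹` energy with `L`-Lipschitz gradient and iterates `x_{k+1} = x_k − τ_k d_k`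
along descent directions `d_k` with Wolfe step sizes `τ_k`, the series
`Σ cos²θ_k ‖∇E(x_k)‖²` converges, where `cos θ_k = ⟨∇E(x_k), d_k⟩/(‖∇E(x_k)‖‖d_k‖)`. -/
theorem zoutendijk
    {H : Type*} [NormedAddCommGroup H] [InnerProductSpace ℝ H] [CompleteSpace H]
    (E : H → ℝ) (gradE : H → H)
    (hE : ∀ x, HasGradientAt E (gradE x) x)
    (hEnonneg : ∀ x, 0 ≤ E x)
    (L : ℝ) (hL : 0 < L)
    (hlip : ∀ x y : H, ‖gradE x - gradE y‖ ≤ L * ‖x - y‖)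
    (x d : ℕ → H) (τ : ℕ → ℝ)
    (hiter : ∀ k, x (k + 1) = x k - τ k • d k)
    (hτ : ∀ k, 0 < τ k)
    (hdescent : ∀ k, 0 < ⟪gradE (x k), d k⟫)
    (α β : ℝ) (hα : 0 < α) (hαβ : α < β) (hβ : β < 1)
    (hwolfe1 : ∀ k, E (x k - τ k • d k) ≤ E (x k) - α * τ k * ⟪gradE (x k), d k⟫)
    (hwolfe2 : ∀ k, ⟪gradE (x k - τ k • d k), -d k⟫ ≥ -β * ⟪gradE (x k), d k⟫) :
    Summable (fun k =>
      (⟪gradE (x k), d k⟫ / (‖gradE (x k)‖ * ‖d k‖)) ^ 2 * ‖gradE (x k)‖ ^ 2) :=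
  zoutendijk_general E gradE hEnonneg L hL hlip x d τ hiter hτ hdescent α β hα hβ hwolfe1 hwolfe2
end

section
/- Under the hypotheses of the Zoutendijk theorem (E ∈ C¹ nonnegative on a Hilbert space H with L-Lipschitz gradient, iterates x_{k+1} = x_k − τ_k d_k with Wolfe step sizes), if in addition there exists c > 0 such that ⟨∇E(x_k), d_k⟩ ≥ c‖∇E(x_k)‖‖d_k‖ for all k (uniform angle condition), then ‖∇E(x_k)‖ → 0 as k → ∞; in particular every accumulation point of {x_k} is a critical point of E. -/
open RealInnerProductSpace

/-- Convergence of descent methods under a uniform angle condition: in the Zoutendijk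
setting, if moreover `⟨∇E(x_k), d_k⟩ ≥ c ‖∇E(x_k)‖ ‖d_k‖` for a fixed `c > 0`, then
`‖∇E(x_k)‖ → 0`, and every accumulation point of `{x_k}` is a critical point of `E`. -/
theorem descent_convergence_angle_condition
    {H : Type*} [NormedAddCommGroup H] [InnerProductSpace ℝ H] [CompleteSpace H]
    (E : H → ℝ) (gradE : H → H)
    (hE : ∀ x, HasGradientAt E (gradE x) x)
    (hEnonneg : ∀ x, 0 ≤ E x)
    (L : ℝ) (hL : 0 < L)
    (hlip : ∀ x y : H, ‖gradE x - gradE y‖ ≤ L * ‖x - y‖)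
    (x d : ℕ → H) (τ : ℕ → ℝ)
    (hiter : ∀ k, x (k + 1) = x k - τ k • d k)
    (hτ : ∀ k, 0 < τ k)
    (hdescent : ∀ k, 0 < ⟪gradE (x k), d k⟫)
    (α β : ℝ) (hα : 0 < α) (hαβ : α < β) (hβ : β < 1)
    (hwolfe1 : ∀ k, E (x k - τ k • d k) ≤ E (x k) - α * τ k * ⟪gradE (x k), d k⟫)
    (hwolfe2 : ∀ k, ⟪gradE (x k - τ k • d k), -d k⟫ ≥ -β * ⟪gradE (x k), d k⟫)
    (c : ℝ) (hc : 0 < c)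
    (hangle : ∀ k, ⟪gradE (x k), d k⟫ ≥ c * ‖gradE (x k)‖ * ‖d k‖) :
    Filter.Tendsto (fun k => ‖gradE (x k)‖) Filter.atTop (nhds 0) ∧
    ∀ xlim : H, (∃ φ : ℕ → ℕ, StrictMono φ ∧
        Filter.Tendsto (fun k => x (φ k)) Filter.atTop (nhds xlim)) →
      gradE xlim = 0 := by
  have hd0 : ∀ k, (0:ℝ) < ‖d k‖ := by
    intro k
    rcases eq_or_ne (d k) 0 with h | h
    · exfalso; have := hdescent k; rw [h, inner_zero_right] at this; exact lt_irrefl _ this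
    · exact norm_pos_iff.mpr h
  set K : ℝ := α * (1 - β) * c ^ 2 / L with hK
  have hKpos : 0 < K := by
    apply div_pos _ hL
    have : 0 < 1 - β := by linarith
    positivity
  -- step size lower bound from Wolfe 2 and Lipschitz
  have hτlow : ∀ k, (1 - β) * ⟪gradE (x k), d k⟫ ≤ L * τ k * ‖d k‖ ^ 2 := by
    intro k
    have h2 := hwolfe2 k
    rw [inner_neg_right] at h2
    have hstep : ⟪gradE (x k) - gradE (x k - τ k • d k), d k⟫ ≥
        (1 - β) * ⟪gradE (x k), d k⟫ := by
      rw [inner_sub_left]; linarith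
    have hcs : ⟪gradE (x k) - gradE (x k - τ k • d k), d k⟫ ≤
        ‖gradE (x k) - gradE (x k - τ k • d k)‖ * ‖d k‖ :=
      real_inner_le_norm _ _
    have hlip' : ‖gradE (x k) - gradE (x k - τ k • d k)‖ ≤ L * (τ k * ‖d k‖) := by
      have := hlip (x k) (x k - τ k • d k)
      have hxx : x k - (x k - τ k • d k) = τ k • d k := by abel
      rw [hxx, norm_smul, Real.norm_eq_abs, abs_of_pos (hτ k)] at this
      linarith
    have hmul : ‖gradE (x k) - gradE (x k - τ k • d k)‖ * ‖d k‖ ≤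
        L * (τ k * ‖d k‖) * ‖d k‖ :=
      mul_le_mul_of_nonneg_right hlip' (norm_nonneg _)
    nlinarith [hd0 k]
  -- sufficient decrease
  have hdec : ∀ k, E (x (k + 1)) ≤ E (x k) - K * ‖gradE (x k)‖ ^ 2 := by
    intro k
    have h1 := hwolfe1 k
    rw [hiter k]
    have hp := hdescent k
    have ha := hangle k
    have hg : 0 ≤ ‖gradE (x k)‖ := norm_nonneg _
    have hdk := hd0 k
    have hpsq : ⟪gradE (x k), d k⟫ ^ 2 ≥ c ^ 2 * ‖gradE (x k)‖ ^ 2 * ‖d k‖ ^ 2 := by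
      nlinarith [mul_nonneg (mul_nonneg hc.le hg) hdk.le]
    have hτl := hτlow k
    have key : K * ‖gradE (x k)‖ ^ 2 ≤ α * τ k * ⟪gradE (x k), d k⟫ := by
      rw [hK, div_mul_eq_mul_div, div_le_iff₀ hL]
      have hαβ' : 0 ≤ α * (1 - β) := mul_nonneg hα.le (by linarith)
      have e1 : α * (1 - β) * (c ^ 2 * ‖gradE (x k)‖ ^ 2 * ‖d k‖ ^ 2) ≤
          α * (1 - β) * ⟪gradE (x k), d k⟫ ^ 2 := mul_le_mul_of_nonneg_left hpsq hαβ'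
      have e2 : (α * ⟪gradE (x k), d k⟫) * ((1 - β) * ⟪gradE (x k), d k⟫) ≤
          (α * ⟪gradE (x k), d k⟫) * (L * τ k * ‖d k‖ ^ 2) :=
        mul_le_mul_of_nonneg_left hτl (mul_nonneg hα.le hp.le)
      have h5 : α * (1 - β) * c ^ 2 * ‖gradE (x k)‖ ^ 2 * ‖d k‖ ^ 2 ≤
          α * τ k * ⟪gradE (x k), d k⟫ * L * ‖d k‖ ^ 2 := by nlinarith [e1, e2]
      have := le_of_mul_le_mul_right (by linarith : α * (1 - β) * c ^ 2 * ‖gradE (x k)‖ ^ 2 * ‖d k‖ ^ 2 ≤ α * τ k * ⟪gradE (x k), d k⟫ * L * ‖d k‖ ^ 2) (pow_pos hdk 2)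
      linarith
    linarith
  -- telescoping
  have hsum : ∀ n, E (x n) + K * ∑ k ∈ Finset.range n, ‖gradE (x k)‖ ^ 2 ≤ E (x 0) := by
    intro n
    induction n with
    | zero => simp
    | succ n ih =>
      rw [Finset.sum_range_succ]
      have := hdec n
      linarith
  have hsummable : Summable (fun k => ‖gradE (x k)‖ ^ 2) := by
    apply summable_of_sum_range_le (c := E (x 0) / K) (fun k => sq_nonneg _)
    intro n
    rw [le_div_iff₀ hKpos]
    have := hsum n
    have := hEnonneg (x n)
    linarith [mul_comm K (∑ k ∈ Finset.range n, ‖gradE (x k)‖ ^ 2)]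
  have hsq0 : Filter.Tendsto (fun k => ‖gradE (x k)‖ ^ 2) Filter.atTop (nhds 0) :=
    hsummable.tendsto_atTop_zero
  have hnorm0 : Filter.Tendsto (fun k => ‖gradE (x k)‖) Filter.atTop (nhds 0) := by
    have h := (Real.continuous_sqrt.tendsto 0).comp hsq0
    rw [Real.sqrt_zero] at h
    have heq : (fun k => ‖gradE (x k)‖) =
        (fun t => Real.sqrt t) ∘ (fun k => ‖gradE (x k)‖ ^ 2) := by
      funext k
      simp [Function.comp, Real.sqrt_sq (norm_nonneg _)]
    rw [heq]
    exact h
  refine ⟨hnorm0, ?_⟩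
  rintro xlim ⟨φ, hφ, hx⟩
  have hcont : Continuous gradE := by
    have : LipschitzWith L.toNNReal gradE := by
      apply LipschitzWith.of_dist_le_mul
      intro a b
      rw [dist_eq_norm, dist_eq_norm, Real.coe_toNNReal L hL.le]
      exact hlip a b
    exact this.continuous
  have h1 : Filter.Tendsto (fun k => gradE (x (φ k))) Filter.atTop (nhds (gradE xlim)) :=
    (hcont.tendsto xlim).comp hx
  have h2 : Filter.Tendsto (fun k => ‖gradE (x (φ k))‖) Filter.atTop (nhds 0) :=
    hnorm0.comp hφ.tendsto_atTop
  have h3 : Filter.Tendsto (fun k => ‖gradE (x (φ k))‖) Filter.atTop (nhds ‖gradE xlim‖) :=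
    h1.norm
  have := tendsto_nhds_unique h3 h2
  exact norm_eq_zero.mp this
end
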